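/- arXiv:1404.6911 — 2 statements merged into one kernel-verified Lean document; each statement's English description precedes it below -/
import Mathlib

section
/- For α ∈ (1,2) there exists a finite constant C such that for all z ≥ 0, Σ_{j=1}^∞ | ∫_j^{j+1} (1 - cos(xz))/x^{α+1} dx - (1 - cos(jz))/j^{α+1} | ≤ C · max(z^2, z^{1+α}). -/
/-!
Write `f(x) = (1 - cos(xz)) / x^(α+1)`. Since `|sin t| ≤ |t|` and `0 ≤ 1 - cos t ≤ t²/2`,
the derivative of `f` is bounded by `(α+3)/2 · z² / x^α` for `x > 0`. By the mean value
theorem the `j`-th term of the series is at most `(α+3)/2 · z² / j^α`, and `∑ j^(-α)`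
converges for `α > 1`. This already gives a bound `C z² ≤ C max(z², z^(1+α))`.
-/

open Real Set intervalIntegral
open scoped Interval

theorem abs_intervalIntegral_sub_mul_le_of_abs_deriv_le {f f' : ℝ → ℝ} {a b M : ℝ}
    (hab : a ≤ b) (hf : ∀ x ∈ Icc a b, HasDerivWithinAt f (f' x) (Icc a b) x)
    (hf' : ∀ x ∈ Icc a b, |f' x| ≤ M) :
    |(∫ x in a..b, f x) - (b - a) * f a| ≤ M * (b - a) ^ 2 := by
  have ha : a ∈ Icc a b := left_mem_Icc.2 hab
  have hM : 0 ≤ M := (abs_nonneg _).trans (hf' a ha)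
  have hint : IntervalIntegrable f MeasureTheory.volume a b :=
    ContinuousOn.intervalIntegrable_of_Icc hab fun x hx => (hf x hx).continuousWithinAt
  have hlip : ∀ x ∈ Ι a b, ‖f x - f a‖ ≤ M * (b - a) := fun x hx => by
    rw [uIoc_of_le hab] at hx
    calc ‖f x - f a‖ ≤ M * ‖x - a‖ :=
          (convex_Icc a b).norm_image_sub_le_of_norm_hasDerivWithin_le hf hf' ha
            (Ioc_subset_Icc_self hx)
      _ ≤ M * (b - a) := by
          rw [Real.norm_of_nonneg (by linarith [hx.1])]
          gcongr
          exact hx.2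
  calc |(∫ x in a..b, f x) - (b - a) * f a| = ‖∫ x in a..b, (f x - f a)‖ := by
        rw [integral_sub hint intervalIntegrable_const, integral_const, smul_eq_mul,
          Real.norm_eq_abs]
    _ ≤ M * (b - a) * |b - a| := norm_integral_le_of_norm_le_const hlip
    _ = M * (b - a) ^ 2 := by rw [abs_of_nonneg (sub_nonneg.2 hab)]; ring

section OneSubCosDivRpow

variable (α z : ℝ)

theorem hasDerivAt_one_sub_cos_mul_div_rpow {x : ℝ} (hx : 0 < x) :
    HasDerivAt (fun x => (1 - cos (x * z)) / x ^ (α + 1))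
      (z * sin (x * z) / x ^ (α + 1) - (α + 1) * (1 - cos (x * z)) / x ^ (α + 2)) x := by
  have hnum : HasDerivAt (fun x => 1 - cos (x * z)) (sin (x * z) * z) x := by
    simpa using ((hasDerivAt_mul_const z).cos).const_sub 1
  have hden : HasDerivAt (fun x => x ^ (α + 1)) ((α + 1) * x ^ α) x := by
    simpa using hasDerivAt_rpow_const (p := α + 1) (Or.inl hx.ne')
  refine (hnum.div hden (rpow_pos_of_pos hx _).ne').congr_deriv ?_
  have : 0 < x ^ α := rpow_pos_of_pos hx α
  rw [rpow_add hx, rpow_add hx, rpow_one, rpow_two]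
  field_simp

theorem abs_deriv_one_sub_cos_mul_div_rpow_le {x : ℝ} (hα : -1 ≤ α) (hx : 0 < x) :
    |z * sin (x * z) / x ^ (α + 1) - (α + 1) * (1 - cos (x * z)) / x ^ (α + 2)|
      ≤ (α + 3) / 2 * z ^ 2 / x ^ α := by
  have hxα : 0 < x ^ α := rpow_pos_of_pos hx α
  have hsin : |z * sin (x * z) * x| ≤ z ^ 2 * x ^ 2 := by
    rw [abs_mul, abs_mul, abs_of_pos hx]
    calc |z| * |sin (x * z)| * x ≤ |z| * |x * z| * x := by
          have := abs_sin_le_abs (x := x * z)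
          gcongr
      _ = z ^ 2 * x ^ 2 := by rw [abs_mul, abs_of_pos hx, ← sq_abs z]; ring
  have hcos₀ : 0 ≤ (α + 1) * (1 - cos (x * z)) :=
    mul_nonneg (by linarith) (sub_nonneg.2 (cos_le_one _))
  have hcos : (α + 1) * (1 - cos (x * z)) ≤ (α + 1) / 2 * z ^ 2 * x ^ 2 := by
    have := one_sub_sq_div_two_le_cos (x := x * z)
    nlinarith
  have hsplit : z * sin (x * z) / x ^ (α + 1) - (α + 1) * (1 - cos (x * z)) / x ^ (α + 2)
      = (z * sin (x * z) * x - (α + 1) * (1 - cos (x * z))) / (x ^ α * x ^ 2) := by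
    rw [rpow_add hx, rpow_add hx, rpow_one, rpow_two]
    field_simp
  have hnum : |z * sin (x * z) * x - (α + 1) * (1 - cos (x * z))|
      ≤ (α + 3) / 2 * z ^ 2 * x ^ 2 := by
    have := abs_le.1 hsin
    exact abs_le.2 ⟨by linarith, by linarith⟩
  rw [hsplit, abs_div, abs_of_pos (mul_pos hxα (pow_pos hx 2)),
    div_le_div_iff₀ (mul_pos hxα (pow_pos hx 2)) hxα]
  calc _ ≤ (α + 3) / 2 * z ^ 2 * x ^ 2 * x ^ α := mul_le_mul_of_nonneg_right hnum hxα.le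
    _ = _ := by ring

theorem abs_integral_one_sub_cos_mul_div_rpow_sub_le {j : ℝ} (hα : 0 ≤ α) (hj : 0 < j) :
    |(∫ x in j..j + 1, (1 - cos (x * z)) / x ^ (α + 1)) - (1 - cos (j * z)) / j ^ (α + 1)|
      ≤ (α + 3) / 2 * z ^ 2 / j ^ α := by
  have hpos : ∀ x ∈ Icc j (j + 1), 0 < x := fun x hx => hj.trans_le hx.1
  simpa using abs_intervalIntegral_sub_mul_le_of_abs_deriv_le (by linarith)
    (fun x hx => (hasDerivAt_one_sub_cos_mul_div_rpow α z (hpos x hx)).hasDerivWithinAt)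
    (fun x hx => (abs_deriv_one_sub_cos_mul_div_rpow_le α z (by linarith) (hpos x hx)).trans
      (div_le_div_of_nonneg_left (by positivity) (rpow_pos_of_pos hj α)
        (rpow_le_rpow hj.le hx.1 hα)))

end OneSubCosDivRpow

theorem series_integral_comparison (α : ℝ) (hα : α ∈ Set.Ioo (1 : ℝ) 2) :
    ∃ C : ℝ, 0 < C ∧ ∀ z : ℝ, 0 ≤ z →
      (∑' n : ℕ,
        |(∫ x in ((n : ℝ) + 1)..((n : ℝ) + 2), (1 - Real.cos (x * z)) / x ^ (α + 1))
          - (1 - Real.cos (((n : ℝ) + 1) * z)) / ((n : ℝ) + 1) ^ (α + 1)|)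
        ≤ C * max (z ^ 2) (z ^ (1 + α)) := by
  have hS : Summable fun n : ℕ => 1 / ((n : ℝ) + 1) ^ α := by
    refine ((Real.summable_one_div_nat_add_rpow 1 α).2 hα.1).congr fun n => ?_
    rw [abs_of_pos (Nat.cast_add_one_pos n)]
  have hSpos : 0 < ∑' n : ℕ, 1 / ((n : ℝ) + 1) ^ α :=
    hS.tsum_pos (fun n => by positivity) 0 (by positivity)
  have hC : 0 < (α + 3) / 2 * ∑' n : ℕ, 1 / ((n : ℝ) + 1) ^ α :=
    mul_pos (by linarith [hα.1]) hSpos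
  refine ⟨_, hC, fun z _ => ?_⟩
  have hterm : ∀ n : ℕ,
      |(∫ x in ((n : ℝ) + 1)..((n : ℝ) + 2), (1 - Real.cos (x * z)) / x ^ (α + 1))
        - (1 - Real.cos (((n : ℝ) + 1) * z)) / ((n : ℝ) + 1) ^ (α + 1)|
      ≤ (α + 3) / 2 * z ^ 2 * (1 / ((n : ℝ) + 1) ^ α) := fun n => by
    rw [mul_one_div, show (n : ℝ) + 2 = n + 1 + 1 by ring]
    exact abs_integral_one_sub_cos_mul_div_rpow_sub_le α z (by linarith [hα.1])
      (Nat.cast_add_one_pos n)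
  have hS' := hS.mul_left ((α + 3) / 2 * z ^ 2)
  calc _ ≤ ∑' n : ℕ, (α + 3) / 2 * z ^ 2 * (1 / ((n : ℝ) + 1) ^ α) :=
        (hS'.of_nonneg_of_le (fun _ => abs_nonneg _) hterm).tsum_le_tsum hterm hS'
    _ = (α + 3) / 2 * (∑' n : ℕ, 1 / ((n : ℝ) + 1) ^ α) * z ^ 2 := by
        rw [tsum_mul_left]; ring
    _ ≤ _ := mul_le_mul_of_nonneg_left (le_max_left _ _) hC.le
end

section
/- For α ∈ (1,2] there exists a constant C (depending only on α) such that for all h ∈ ℝ with 0 < |h| ≤ 1, ∫_0^∞ min(1, |h|·ζ)^2 / (1 + ζ^α) dζ ≤ C·|h|^{α-1}. -/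
/-!
Split the integral at `ζ = r⁻¹`, where `r = |h|`. Below the split point the integrand is at most
`(r ζ)² / ζ^α = r² ζ^(2-α)`, whose integral over `(0, r⁻¹]` is `r^(α-1) / (3 - α)`; above it the
integrand is at most `ζ^(-α)`, whose integral over `(r⁻¹, ∞)` is `r^(α-1) / (α - 1)`.
-/

open MeasureTheory Set Real

theorem setIntegral_Ioi_le_add_of_abs_le {f g₁ g₂ : ℝ → ℝ} {a M : ℝ} (haM : a ≤ M)
    (hf : AEStronglyMeasurable f (volume.restrict (Ioi a)))
    (hg₁ : IntegrableOn g₁ (Ioc a M)) (hg₂ : IntegrableOn g₂ (Ioi M))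
    (hfg₁ : ∀ x ∈ Ioc a M, |f x| ≤ g₁ x) (hfg₂ : ∀ x ∈ Ioi M, |f x| ≤ g₂ x) :
    ∫ x in Ioi a, f x ≤ (∫ x in Ioc a M, g₁ x) + ∫ x in Ioi M, g₂ x := by
  have hf₁ : IntegrableOn f (Ioc a M) :=
    hg₁.mono' (hf.mono_measure (Measure.restrict_mono Ioc_subset_Ioi_self le_rfl))
      ((ae_restrict_mem measurableSet_Ioc).mono hfg₁)
  have hf₂ : IntegrableOn f (Ioi M) :=
    hg₂.mono' (hf.mono_measure (Measure.restrict_mono (Ioi_subset_Ioi haM) le_rfl))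
      ((ae_restrict_mem measurableSet_Ioi).mono hfg₂)
  rw [← Ioc_union_Ioi_eq_Ioi haM,
    setIntegral_union (Ioc_disjoint_Ioi le_rfl) measurableSet_Ioi hf₁ hf₂]
  exact add_le_add
    (setIntegral_mono_on hf₁ hg₁ measurableSet_Ioc fun x hx => (le_abs_self _).trans (hfg₁ x hx))
    (setIntegral_mono_on hf₂ hg₂ measurableSet_Ioi fun x hx => (le_abs_self _).trans (hfg₂ x hx))

section Integrand

variable {r ζ α : ℝ}

theorem abs_min_one_sq_div_one_add_rpow_le (hζ : 0 < ζ) {b : ℝ}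
    (hb : min 1 (r * ζ) ^ 2 ≤ b) : |min 1 (r * ζ) ^ 2 / (1 + ζ ^ α)| ≤ b / ζ ^ α := by
  have hpow : 0 < ζ ^ α := rpow_pos_of_pos hζ α
  rw [abs_of_nonneg (by positivity)]
  exact (div_le_div_of_nonneg_right hb (by positivity)).trans
    (div_le_div_of_nonneg_left ((sq_nonneg _).trans hb) hpow (by linarith))

theorem abs_min_one_sq_div_one_add_rpow_le_mul_rpow (hr : 0 ≤ r) (hζ : 0 < ζ) :
    |min 1 (r * ζ) ^ 2 / (1 + ζ ^ α)| ≤ r ^ 2 * ζ ^ (2 - α) := by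
  have hmin : min 1 (r * ζ) ^ 2 ≤ (r * ζ) ^ 2 :=
    pow_le_pow_left₀ (le_min zero_le_one (by positivity)) (min_le_right _ _) 2
  refine (abs_min_one_sq_div_one_add_rpow_le hζ hmin).trans_eq ?_
  rw [rpow_sub hζ, rpow_two, mul_pow]
  ring

theorem abs_min_one_sq_div_one_add_rpow_le_rpow_neg (hr : 0 ≤ r) (hζ : 0 < ζ) :
    |min 1 (r * ζ) ^ 2 / (1 + ζ ^ α)| ≤ ζ ^ (-α) := by
  have hmin : min 1 (r * ζ) ^ 2 ≤ 1 :=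
    pow_le_one₀ (le_min zero_le_one (by positivity)) (min_le_left _ _)
  rw [rpow_neg hζ.le, inv_eq_one_div]
  exact abs_min_one_sq_div_one_add_rpow_le hζ hmin

theorem integrableOn_Ioc_mul_rpow (hr : 0 < r) (hα : α < 3) :
    IntegrableOn (fun ζ => r ^ 2 * ζ ^ (2 - α)) (Ioc 0 r⁻¹) := by
  exact Integrable.const_mul ((intervalIntegrable_iff_integrableOn_Ioc_of_le (inv_pos.2 hr).le).1
    (intervalIntegral.intervalIntegrable_rpow' (by linarith))) _

theorem integral_Ioc_mul_rpow (hr : 0 < r) (hα : α < 3) :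
    ∫ ζ in Ioc 0 r⁻¹, r ^ 2 * ζ ^ (2 - α) = r ^ (α - 1) / (3 - α) := by
  rw [integral_const_mul, ← intervalIntegral.integral_of_le (inv_pos.2 hr).le,
    integral_rpow (Or.inl (by linarith)), zero_rpow (by linarith), sub_zero,
    inv_rpow hr.le, ← rpow_neg hr.le, ← rpow_natCast, mul_div_assoc', ← rpow_add hr]
  congr 1 <;> push_cast <;> ring_nf

theorem integral_Ioi_rpow_neg (hr : 0 < r) (hα : 1 < α) :
    ∫ ζ in Ioi r⁻¹, ζ ^ (-α) = r ^ (α - 1) / (α - 1) := by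
  rw [integral_Ioi_rpow_of_lt (by linarith) (inv_pos.2 hr), inv_rpow hr.le, ← rpow_neg hr.le,
    show -α + 1 = -(α - 1) by ring, neg_neg, neg_div_neg_eq]

end Integrand

theorem spatial_modulus_integral (α : ℝ) (hα : α ∈ Set.Ioc (1 : ℝ) 2) :
    ∃ C : ℝ, 0 < C ∧ ∀ h : ℝ, 0 < |h| → |h| ≤ 1 →
      (∫ ζ in Set.Ioi (0 : ℝ), (min 1 (|h| * ζ)) ^ 2 / (1 + ζ ^ α))
        ≤ C * |h| ^ (α - 1) := by
  obtain ⟨hα₁, hα₂⟩ := hα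
  have hα₃ : α < 3 := by linarith
  refine ⟨1 / (3 - α) + 1 / (α - 1),
    add_pos (one_div_pos.2 (by linarith)) (one_div_pos.2 (by linarith)), fun h hh _ => ?_⟩
  calc (∫ ζ in Ioi (0 : ℝ), min 1 (|h| * ζ) ^ 2 / (1 + ζ ^ α))
      ≤ (∫ ζ in Ioc 0 |h|⁻¹, |h| ^ 2 * ζ ^ (2 - α)) + ∫ ζ in Ioi |h|⁻¹, ζ ^ (-α) :=
        setIntegral_Ioi_le_add_of_abs_le (inv_pos.2 hh).le
          (by fun_prop : Measurable _).aestronglyMeasurable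
          (integrableOn_Ioc_mul_rpow hh hα₃)
          (integrableOn_Ioi_rpow_of_lt (by linarith) (inv_pos.2 hh))
          (fun ζ hζ => abs_min_one_sq_div_one_add_rpow_le_mul_rpow hh.le hζ.1)
          (fun ζ hζ => abs_min_one_sq_div_one_add_rpow_le_rpow_neg hh.le
            ((inv_pos.2 hh).trans hζ))
    _ = (1 / (3 - α) + 1 / (α - 1)) * |h| ^ (α - 1) := by
        rw [integral_Ioc_mul_rpow hh hα₃, integral_Ioi_rpow_neg hh hα₁]
        ring
end
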